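/- arXiv:2603.20715 — 3 statements merged into one kernel-verified Lean document; each statement's English description precedes it below -/
import Mathlib

section
/- Let a_1, …, a_N ∈ ℤ^n be vectors that span ℚ^n over ℚ and such that there exists v ∈ ℚ^n with ⟨v, a_j⟩ = 1 for all j (homogeneity), with N > n. Let w = (w_1, …, w_N) ∈ ℝ^N. Suppose there exist indices 1 ≤ i_1 < … < i_{N−n−1} ≤ N and nonnegative real numbers λ_1, …, λ_{N−n−1} such that for every u = (u_1, …, u_N) ∈ ℝ^N with u_1 a_1 + … + u_N a_N = 0 one has w_1 u_1 + … + w_N u_N = λ_1 u_{i_1} + … + λ_{N−n−1} u_{i_{N−n−1}}. Then S(w) is not a regular triangulation, i.e., some element of S(w) that is maximal with respect to inclusion fails to be a simplex. -/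
open scoped BigOperators

/-!
Put `c := ∑ₖ λₖ e_{iₖ} ≥ 0`. The hypothesis says that `w - c` vanishes on every linear relation
among the `aⱼ`, so `w - c = (⟨m, aⱼ⟩)ⱼ` for some `m`. This `m` exhibits the zero set of `c` as a
cell of `S(w)`; since `c` is supported on at most `N - n - 1` indices, that cell has more than `n`
elements, and so does every maximal cell containing it.
-/

/-- Membership of a subset `σ` in the regular subdivision `S(w)` of the point
configuration `a : ι → (Fin n → ℝ)` with weight vector `w`. -/
def memSubdiv {ι : Type*} {n : ℕ} (a : ι → Fin n → ℝ) (w : ι → ℝ) (σ : Finset ι) : Prop :=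
  ∃ m : Fin n → ℝ,
    (∀ i ∈ σ, ∑ k, m k * a i k = w i) ∧ ∀ j, j ∉ σ → ∑ k, m k * a j k < w j

theorem exists_sum_mul_eq_of_forall_sum_mul_eq_zero {K ι κ : Type*} [Field K] [Fintype ι]
    [Fintype κ] (a : ι → κ → K) (c : ι → K)
    (h : ∀ u : ι → K, (∀ i, ∑ j, u j * a j i = 0) → ∑ j, c j * u j = 0) :
    ∃ m : κ → K, ∀ j, ∑ i, m i * a j i = c j := by
  classical
  by_contra! hc
  have hc_range : c ∉ LinearMap.range (Matrix.of a).mulVecLin := by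
    rintro ⟨m, rfl⟩
    obtain ⟨j, hj⟩ := hc m
    exact hj (by simp [Matrix.mulVec, dotProduct, mul_comm])
  obtain ⟨f, hfc, hf⟩ := Submodule.exists_le_ker_of_notMem hc_range
  set u : ι → K := fun j => f (Pi.single j 1)
  have hf_apply (x : ι → K) : f x = ∑ j, x j * u j := by
    rw [f.pi_apply_eq_sum_univ x]
    congr! with j _ k
    simp [Pi.single_apply, eq_comm]
  refine hfc ((hf_apply c).trans (h u fun i => ?_))
  have := hf (LinearMap.mem_range_self _ (Pi.single i 1))
  simpa [hf_apply, Matrix.mulVec_single_one, mul_comm] using this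

theorem sum_sum_pi_single_mul {ι κ R : Type*} [Fintype ι] [Fintype κ] [DecidableEq ι]
    [CommSemiring R] (f : κ → ι) (g : κ → R) (u : ι → R) :
    ∑ j, (∑ k, Pi.single (f k) (g k) : ι → R) j * u j = ∑ k, g k * u (f k) := by
  simp only [Finset.sum_apply, Finset.sum_mul]
  rw [Finset.sum_comm]
  simp [Pi.single_apply, ite_mul]

theorem sum_pi_single_apply_eq_zero_of_notMem_range {ι κ M : Type*} [Fintype κ] [DecidableEq ι]
    [AddCommMonoid M] {f : κ → ι} (g : κ → M) {j : ι} (hj : j ∉ Set.range f) :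
    (∑ k, Pi.single (f k) (g k) : ι → M) j = 0 := by
  simp only [Finset.sum_apply]
  exact Finset.sum_eq_zero fun k _ => Pi.single_eq_of_ne (fun h => hj ⟨k, h.symm⟩) _

theorem memSubdiv_of_mem_iff_eq_zero {ι : Type*} {n : ℕ} {a : ι → Fin n → ℝ} {w c : ι → ℝ}
    (hc : 0 ≤ c) {m : Fin n → ℝ} (hm : ∀ j, ∑ k, m k * a j k = w j - c j) {σ : Finset ι}
    (hσ : ∀ j, j ∈ σ ↔ c j = 0) : memSubdiv a w σ := by
  refine ⟨m, fun j hj => by rw [hm, (hσ j).1 hj, sub_zero], fun j hj => ?_⟩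
  have : 0 < c j := (hc j).lt_of_ne' (mt (hσ j).2 hj)
  linarith [hm j]

theorem stmt1_general {N n : ℕ} (hNn : n < N) (a : Fin N → Fin n → ℤ)
    (w : Fin N → ℝ)
    (ι : Fin (N - n - 1) → Fin N)
    (lam : Fin (N - n - 1) → ℝ) (hlam : ∀ k, 0 ≤ lam k)
    (hw : ∀ u : Fin N → ℝ, (∀ i : Fin n, ∑ j, u j * (a j i : ℝ) = 0) →
      ∑ j, w j * u j = ∑ k, lam k * u (ι k)) :
    ∃ σ : Finset (Fin N),
      memSubdiv (fun j i => (a j i : ℝ)) w σ ∧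
      (∀ τ : Finset (Fin N), memSubdiv (fun j i => (a j i : ℝ)) w τ → σ ⊆ τ → σ = τ) ∧
      ¬ (σ.card = n ∧ LinearIndependent ℝ (fun i : σ => fun k => (a i k : ℝ))) := by
  classical
  set c : Fin N → ℝ := ∑ k, Pi.single (ι k) (lam k)
  have hc : 0 ≤ c := Finset.sum_nonneg fun k _ => Pi.single_nonneg.2 (hlam k)
  obtain ⟨m, hm⟩ := exists_sum_mul_eq_of_forall_sum_mul_eq_zero (fun j i => (a j i : ℝ)) (w - c)
    fun u hu => by
      simp only [Pi.sub_apply, sub_mul, Finset.sum_sub_distrib, hw u hu, c, sum_sum_pi_single_mul,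
        sub_self]
  set σ₀ := Finset.univ.filter (c · = 0)
  have hσ₀ : memSubdiv (fun j i => (a j i : ℝ)) w σ₀ :=
    memSubdiv_of_mem_iff_eq_zero hc hm fun j => by simp [σ₀]
  have hσ₀_card : n < σ₀.card := by
    have hsupp : (Finset.univ.image ι)ᶜ ⊆ σ₀ := fun j hj =>
      Finset.mem_filter.2 ⟨Finset.mem_univ j, sum_pi_single_apply_eq_zero_of_notMem_range lam
        (by simpa using hj)⟩
    have hrange : (Finset.univ.image ι).card ≤ N - n - 1 := by
      simpa using Finset.card_image_le (s := Finset.univ) (f := ι)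
    calc n < N - (Finset.univ.image ι).card := by omega
      _ = (Finset.univ.image ι)ᶜ.card := by rw [Finset.card_compl, Fintype.card_fin]
      _ ≤ σ₀.card := Finset.card_le_card hsupp
  obtain ⟨τ, hσ₀τ, hτ⟩ := Finite.exists_le_maximal hσ₀
  exact ⟨τ, hτ.1, fun τ' hτ' hττ' => le_antisymm hττ' (hτ.2 hτ' hττ'),
    fun ⟨hτ_card, _⟩ => by have := Finset.card_le_card hσ₀τ; omega⟩

/-- If the weight vector `w` lies (modulo the row span) in a cone spanned by `N - n - 1`
of the Gale dual vectors, then the regular subdivision `S(w)` is not a regular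
triangulation: some maximal element of `S(w)` fails to be a simplex. -/
theorem stmt1 {N n : ℕ} (hNn : n < N) (a : Fin N → Fin n → ℤ)
    (hspan : Submodule.span ℚ (Set.range (fun j => fun i => (a j i : ℚ))) = ⊤)
    (hhom : ∃ v : Fin n → ℚ, ∀ j, ∑ i, v i * (a j i : ℚ) = 1)
    (w : Fin N → ℝ)
    (ι : Fin (N - n - 1) → Fin N) (hι : StrictMono ι)
    (lam : Fin (N - n - 1) → ℝ) (hlam : ∀ k, 0 ≤ lam k)
    (hw : ∀ u : Fin N → ℝ, (∀ i : Fin n, ∑ j, u j * (a j i : ℝ) = 0) →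
      ∑ j, w j * u j = ∑ k, lam k * u (ι k)) :
    ∃ σ : Finset (Fin N),
      memSubdiv (fun j i => (a j i : ℝ)) w σ ∧
      (∀ τ : Finset (Fin N), memSubdiv (fun j i => (a j i : ℝ)) w τ → σ ⊆ τ → σ = τ) ∧
      ¬ (σ.card = n ∧ LinearIndependent ℝ (fun i : σ => fun k => (a i k : ℝ))) :=
  stmt1_general hNn a w ι lam hlam hw
end

section
/- Let a_1, …, a_N ∈ ℤ^n be vectors that span ℚ^n over ℚ and such that there exists v ∈ ℚ^n with ⟨v, a_j⟩ = 1 for all j, and let d be a positive integer. Set a_{N+j} := d·e_j for j = 1, …, n, where e_1, …, e_n is the standard basis of ℤ^n. If w = (w_1, …, w_N) ∈ ℝ^N is such that the regular subdivision S(w) of the configuration a_1, …, a_N is a regular triangulation, then for every M ∈ ℝ there exist real numbers w_{N+1}, …, w_{N+n}, each greater than M, such that the regular subdivision S(w') of the extended configuration a_1, …, a_{N+n}, where w' = (w_1, …, w_{N+n}), is a regular triangulation. -/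
open scoped BigOperators

/-- `S(w)` is a regular triangulation: every element of the regular subdivision `S(w)`
that is maximal with respect to inclusion is a simplex. -/
def IsRegularTriangulation {ι : Type*} {n : ℕ} (a : ι → Fin n → ℝ) (w : ι → ℝ) : Prop :=
  ∀ σ : Finset ι, memSubdiv a w σ →
    (∀ τ : Finset ι, memSubdiv a w τ → σ ⊆ τ → σ = τ) →
    σ.card = n ∧ LinearIndependent ℝ (fun i : σ => a i)

open MeasureTheory in
lemma avoid {n : ℕ} {π : Type*} (P : Finset π) (α : π → Fin n → ℝ) (β : π → ℝ)
    (hα : ∀ p ∈ P, α p ≠ 0) (M : ℝ) :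
    ∃ x : Fin n → ℝ, (∀ j, M < x j) ∧ ∀ p ∈ P, ∑ j, α p j * x j + β p ≠ 0 := by
  classical
  set bad : Set (Fin n → ℝ) := ⋃ p ∈ P, {x | ∑ j, α p j * x j + β p = 0} with hbad
  have hnull : volume bad = 0 := by
    refine (measure_biUnion_null_iff P.countable_toSet).2 fun p hp => ?_
    set L : (Fin n → ℝ) →ₗ[ℝ] ℝ :=
      { toFun := fun x => ∑ j, α p j * x j
        map_add' := by intro x y; simp [mul_add, Finset.sum_add_distrib]
        map_smul' := by
          intro c x
          simp only [Pi.smul_apply, smul_eq_mul, RingHom.id_apply, Finset.mul_sum]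
          exact Finset.sum_congr rfl fun j _ => by ring } with hL
    have hLval : ∀ x, L x = ∑ j, α p j * x j := fun x => rfl
    have hLne : L ≠ 0 := by
      obtain ⟨j, hj⟩ : ∃ j, α p j ≠ 0 := by
        by_contra h; push_neg at h; exact hα p hp (funext h)
      intro h0
      have : L (Pi.single j 1) = 0 := by rw [h0]; rfl
      rw [hLval] at this
      simp [Pi.single_apply, mul_ite, Finset.sum_ite_eq'] at this
      exact hj this
    rcases Set.eq_empty_or_nonempty {x : Fin n → ℝ | ∑ j, α p j * x j + β p = 0} with h | ⟨x₀, hx₀⟩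
    · simp [h]
    · have hset : {x : Fin n → ℝ | ∑ j, α p j * x j + β p = 0} =
          (AffineSubspace.mk' x₀ (LinearMap.ker L) : Set (Fin n → ℝ)) := by
        ext x
        rw [SetLike.mem_coe, AffineSubspace.mem_mk', LinearMap.mem_ker]
        have hx0' : L x₀ + β p = 0 := hx₀
        constructor
        · intro hx
          have hx' : L x + β p = 0 := hx
          have : L (x -ᵥ x₀) = L x - L x₀ := map_sub L x x₀
          rw [this]; linarith
        · intro hv
          have : L x - L x₀ = 0 := by rw [← map_sub]; exact hv
          show L x + β p = 0
          linarith
      rw [hset]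
      refine Measure.addHaar_affineSubspace volume _ fun htop => ?_
      have : (AffineSubspace.mk' x₀ (LinearMap.ker L)).direction = ⊤ := by
        rw [htop]; exact AffineSubspace.direction_top ℝ _ _
      rw [AffineSubspace.direction_mk'] at this
      exact hLne (LinearMap.ker_eq_top.1 this)
  set B : Set (Fin n → ℝ) := Set.pi Set.univ fun _ => Set.Ioi M with hB
  have hBvol : volume B ≠ 0 := by
    rw [hB, volume_pi_pi]
    simp [Real.volume_Ioi]
  have : ¬ B ⊆ bad := fun h => hBvol (le_antisymm (hnull ▸ measure_mono h) bot_le)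
  obtain ⟨x, hxB, hxbad⟩ := Set.not_subset.1 this
  refine ⟨x, fun j => hxB j (Set.mem_univ j), fun p hp h => hxbad ?_⟩
  exact Set.mem_biUnion hp h

open scoped BigOperators

section lemmas
variable {ι : Type*} [Fintype ι] {n : ℕ} (a : ι → Fin n → ℝ) (w : ι → ℝ)

/-- If the witness direction can be perturbed, a member of the subdivision
which does not "see" all normals can be strictly enlarged. -/
lemma exists_larger (σ : Finset ι) (m : Fin n → ℝ)
    (hm_eq : ∀ i ∈ σ, ∑ k, m k * a i k = w i)
    (hm_lt : ∀ j, j ∉ σ → ∑ k, m k * a j k < w j)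
    (u : Fin n → ℝ) (hu0 : ∀ i ∈ σ, ∑ k, u k * a i k = 0)
    (j₀ : ι) (hj₀ : j₀ ∉ σ) (hj₀pos : 0 < ∑ k, u k * a j₀ k) :
    ∃ τ : Finset ι, memSubdiv a w τ ∧ σ ⊆ τ ∧ σ ≠ τ := by
  classical
  set du : ι → ℝ := fun j => ∑ k, u k * a j k with hdu
  set dm : ι → ℝ := fun j => ∑ k, m k * a j k with hdm
  set J : Finset ι := Finset.univ.filter fun j => j ∉ σ ∧ 0 < du j with hJdef
  have hJ : j₀ ∈ J := by simp [hJdef, hdu, hj₀, hj₀pos]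
  have hJne : J.Nonempty := ⟨j₀, hJ⟩
  set t : ℝ := J.inf' hJne fun j => (w j - dm j) / du j with ht
  have htpos : 0 < t := by
    rw [ht, Finset.lt_inf'_iff]
    intro j hj
    rw [hJdef, Finset.mem_filter] at hj
    exact div_pos (sub_pos.2 (hm_lt j hj.2.1)) hj.2.2
  set τ : Finset ι := σ ∪ J.filter (fun j => dm j + t * du j = w j) with hτdef
  have hm' : ∀ j, (∑ k, (m k + t * u k) * a j k) = dm j + t * du j := by
    intro j
    rw [hdm, hdu, Finset.mul_sum, ← Finset.sum_add_distrib]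
    refine Finset.sum_congr rfl fun k _ => by ring
  refine ⟨τ, ⟨fun k => m k + t * u k, ?_, ?_⟩, Finset.subset_union_left, ?_⟩
  · intro i hi
    rw [hm']
    rw [hτdef, Finset.mem_union] at hi
    rcases hi with hi | hi
    · have : du i = 0 := hu0 i hi
      rw [this, mul_zero, add_zero]; exact hm_eq i hi
    · exact (Finset.mem_filter.1 hi).2
  · intro j hj
    rw [hm']
    rw [hτdef, Finset.mem_union, not_or] at hj
    obtain ⟨hjσ, hjf⟩ := hj
    by_cases hjJ : j ∈ J
    · have hne : dm j + t * du j ≠ w j := fun h => hjf (Finset.mem_filter.2 ⟨hjJ, h⟩)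
      have hdupos : 0 < du j := ((Finset.mem_filter.1 hjJ).2).2
      have hle : t ≤ (w j - dm j) / du j := Finset.inf'_le _ hjJ
      have : t * du j ≤ w j - dm j := (le_div_iff₀ hdupos).1 hle
      have : dm j + t * du j ≤ w j := by linarith
      exact lt_of_le_of_ne this hne
    · have hdule : du j ≤ 0 := by
        by_contra h
        exact hjJ (Finset.mem_filter.2 ⟨Finset.mem_univ j, hjσ, lt_of_not_ge h⟩)
      have h1 : dm j < w j := hm_lt j hjσ
      nlinarith
  · obtain ⟨j, hjJ, hjt⟩ := Finset.exists_mem_eq_inf' hJne fun j => (w j - dm j) / du j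
    have hdupos : 0 < du j := ((Finset.mem_filter.1 hjJ).2).2
    have hjσ : j ∉ σ := ((Finset.mem_filter.1 hjJ).2).1
    have heq : dm j + t * du j = w j := by
      rw [← ht] at hjt
      rw [hjt, div_mul_cancel₀ _ (ne_of_gt hdupos)]
      ring
    intro hστ
    exact hjσ (hστ ▸ Finset.mem_union_right _ (Finset.mem_filter.2 ⟨hjJ, heq⟩))

/-- A maximal member of the regular subdivision spans everything spanned by the configuration. -/
lemma span_of_maximal (hspan : Submodule.span ℝ (Set.range a) = ⊤)
    (σ : Finset ι) (hσ : memSubdiv a w σ)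
    (hmax : ∀ τ : Finset ι, memSubdiv a w τ → σ ⊆ τ → σ = τ) :
    Submodule.span ℝ (a '' ↑σ) = ⊤ := by
  classical
  by_contra hne
  obtain ⟨f, hf0, hfbot⟩ :=
    Submodule.exists_dual_map_eq_bot_of_lt_top (lt_top_iff_ne_top.2 hne)
      inferInstance
  obtain ⟨m, hm_eq, hm_lt⟩ := hσ
  set u : Fin n → ℝ := fun i => f (fun j => if i = j then 1 else 0) with hu
  have hfu : ∀ x : Fin n → ℝ, f x = ∑ k, u k * x k := by
    intro x
    rw [LinearMap.pi_apply_eq_sum_univ f x]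
    exact Finset.sum_congr rfl fun k _ => by rw [smul_eq_mul, mul_comm]
  have hu0 : ∀ i ∈ σ, ∑ k, u k * a i k = 0 := by
    intro i hi
    rw [← hfu]
    have : a i ∈ Submodule.span ℝ (a '' ↑σ) :=
      Submodule.subset_span ⟨i, by simpa using hi, rfl⟩
    have : f (a i) ∈ Submodule.map f (Submodule.span ℝ (a '' ↑σ)) :=
      Submodule.mem_map_of_mem this
    rw [hfbot] at this
    simpa using this
  obtain ⟨j₀, hj₀ne⟩ : ∃ j₀, f (a j₀) ≠ 0 := by
    by_contra h
    push_neg at h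
    apply hf0
    refine LinearMap.ext fun x => ?_
    have hx : x ∈ Submodule.span ℝ (Set.range a) := hspan ▸ Submodule.mem_top
    show f x = 0
    refine Submodule.span_induction ?_ (by simp) ?_ ?_ hx
    · rintro y ⟨j, rfl⟩; exact h j
    · intro y z _ _ hy hz; rw [map_add, hy, hz, add_zero]
    · intro c y _ hy; rw [map_smul, hy, smul_zero]
  have hj₀σ : j₀ ∉ σ := fun h => hj₀ne (by rw [hfu]; exact hu0 j₀ h)
  rcases lt_or_gt_of_ne hj₀ne with hneg | hpos
  · obtain ⟨τ, hτ, hsub, hne'⟩ := exists_larger a w σ m hm_eq hm_lt (fun k => -u k)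
      (fun i hi => by
        have h1 := hu0 i hi
        have h2 : ∑ k, (fun k => -u k) k * a i k = -∑ k, u k * a i k := by
          simp [neg_mul]
        rw [h2, h1, neg_zero]) j₀ hj₀σ
      (by
        rw [hfu] at hneg
        have h2 : ∑ k, (fun k => -u k) k * a j₀ k = -∑ k, u k * a j₀ k := by
          simp [neg_mul]
        rw [h2]; linarith)
    exact hne' (hmax τ hτ hsub)
  · obtain ⟨τ, hτ, hsub, hne'⟩ := exists_larger a w σ m hm_eq hm_lt u hu0 j₀ hj₀σ
      (by rw [hfu] at hpos; exact hpos)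
    exact hne' (hmax τ hτ hsub)

end lemmas

lemma exists_basis_subset {ι : Type*} {n : ℕ} (a : ι → Fin n → ℝ) (σ : Finset ι)
    (hspan : Submodule.span ℝ (a '' ↑σ) = ⊤) :
    ∃ τ : Finset ι, τ ⊆ σ ∧ τ.card = n ∧ Set.InjOn a ↑τ ∧
      LinearIndependent ℝ (fun k : τ => a k) ∧ Submodule.span ℝ (a '' ↑τ) = ⊤ := by
  classical
  obtain ⟨b, hb_sub, hb_span, hb_ind⟩ := exists_linearIndependent ℝ (a '' ↑σ)
  rw [hspan] at hb_span
  have hbfin : b.Finite := Set.Finite.subset (σ.finite_toSet.image a) hb_sub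
  set B : Finset (Fin n → ℝ) := hbfin.toFinset with hB
  have hBb : ↑B = b := hbfin.coe_toFinset
  have hmem : ∀ x ∈ B, ∃ i, i ∈ σ ∧ a i = x := by
    intro x hx
    have : x ∈ a '' ↑σ := hb_sub (by rw [← hBb]; exact Finset.mem_coe.2 hx)
    obtain ⟨i, hi, rfl⟩ := this
    exact ⟨i, by simpa using hi, rfl⟩
  choose g hg1 hg2 using hmem
  set τ : Finset ι := B.attach.image (fun x => g x.1 x.2) with hτ
  have hτσ : τ ⊆ σ := by
    intro i hi
    rw [hτ, Finset.mem_image] at hi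
    obtain ⟨x, _, rfl⟩ := hi
    exact hg1 x.1 x.2
  have himg : a '' ↑τ = b := by
    ext y
    constructor
    · rintro ⟨i, hi, rfl⟩
      rw [Finset.mem_coe, hτ, Finset.mem_image] at hi
      obtain ⟨x, _, rfl⟩ := hi
      rw [hg2 x.1 x.2, ← hBb]
      exact x.2
    · intro hy
      have hyB : y ∈ B := by rw [← hBb] at hy; exact Finset.mem_coe.1 hy
      refine ⟨g y hyB, ?_, hg2 y hyB⟩
      rw [Finset.mem_coe, hτ, Finset.mem_image]
      exact ⟨⟨y, hyB⟩, Finset.mem_attach _ _, rfl⟩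
  have hinj : Set.InjOn a ↑τ := by
    intro x hx y hy hxy
    rw [Finset.mem_coe, hτ, Finset.mem_image] at hx hy
    obtain ⟨x₁, _, rfl⟩ := hx
    obtain ⟨y₁, _, rfl⟩ := hy
    rw [hg2 x₁.1 x₁.2, hg2 y₁.1 y₁.2] at hxy
    cases x₁; cases y₁
    simp only at hxy
    subst hxy
    rfl
  haveI : Fintype b := hbfin.fintype
  have hbasis : Module.Basis b ℝ (Fin n → ℝ) :=
    Module.Basis.mk hb_ind (by rw [Subtype.range_coe]; exact hb_span.ge)
  have hcardb : Fintype.card b = n := by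
    have h1 := Module.finrank_eq_card_basis hbasis
    rw [Module.finrank_pi ℝ] at h1
    simpa using h1.symm
  have hcardB : B.card = n := by
    rw [← Fintype.card_coe]
    have e : {x // x ∈ B} ≃ {x : Fin n → ℝ // x ∈ b} :=
      Equiv.subtypeEquivRight fun x => by rw [← hBb]; exact Finset.mem_coe.symm
    refine (Fintype.card_congr e).trans ?_
    convert hcardb
  have hcardτ : τ.card = n := by
    rw [hτ, Finset.card_image_of_injOn, Finset.card_attach]
    · exact hcardB
    · intro x _ y _ hxy
      have h' : a (g x.1 x.2) = a (g y.1 y.2) := congrArg a hxy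
      rw [hg2 x.1 x.2, hg2 y.1 y.2] at h'
      cases x; cases y; simp only at h'; subst h'; rfl
  have hind : LinearIndependent ℝ (fun k : τ => a k) := by
    have := (linearIndepOn_iff_image hinj (R := ℝ)).2 (by rw [himg]; exact hb_ind)
    exact this
  exact ⟨τ, hτσ, hcardτ, hinj, hind, by rw [himg]; exact hb_span⟩

lemma exists_rep {ι : Type*} {n : ℕ} (a : ι → Fin n → ℝ) (τ : Finset ι)
    (hinj : Set.InjOn a ↑τ) (x : Fin n → ℝ)
    (hx : x ∈ Submodule.span ℝ (a '' ↑τ)) :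
    ∃ c : ι → ℝ, (∀ k, k ∉ τ → c k = 0) ∧ ∑ k ∈ τ, c k • a k = x := by
  classical
  rw [← Finset.coe_image] at hx
  obtain ⟨f, -, hf⟩ := Submodule.mem_span_finset.1 hx
  refine ⟨fun k => if k ∈ τ then f (a k) else 0, fun k hk => by simp [hk], ?_⟩
  have h1 : ∑ v ∈ τ.image a, f v • v = ∑ k ∈ τ, f (a k) • a k :=
    Finset.sum_image (fun x hx y hy h => hinj (Finset.mem_coe.2 hx) (Finset.mem_coe.2 hy) h)
  calc ∑ k ∈ τ, (if k ∈ τ then f (a k) else 0) • a k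
      = ∑ k ∈ τ, f (a k) • a k := Finset.sum_congr rfl fun k hk => by rw [if_pos hk]
    _ = ∑ v ∈ τ.image a, f v • v := h1.symm
    _ = x := hf


/-- If `S(w)` is a regular triangulation of the configuration `a_1, …, a_N`, then for any
`M` one can choose weights `w_{N+1}, …, w_{N+n}`, all greater than `M`, so that the
regular subdivision of the configuration extended by `d·e_1, …, d·e_n` is again a
regular triangulation. -/
theorem stmt2 {N n : ℕ} (d : ℕ) (hd : 0 < d)
    (a : Fin N → Fin n → ℤ)
    (hspan : Submodule.span ℚ (Set.range (fun j => fun i => (a j i : ℚ))) = ⊤)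
    (hhom : ∃ v : Fin n → ℚ, ∀ j, ∑ i, v i * (a j i : ℚ) = 1)
    (w : Fin N → ℝ)
    (hw : IsRegularTriangulation (fun j i => (a j i : ℝ)) w)
    (M : ℝ) :
    ∃ wext : Fin n → ℝ, (∀ j, M < wext j) ∧
      IsRegularTriangulation
        (Sum.elim (fun (j : Fin N) (i : Fin n) => (a j i : ℝ))
          (fun (j : Fin n) (i : Fin n) => if i = j then (d : ℝ) else 0))
        (Sum.elim w wext) := by
  classical
  clear hspan hhom
  set aold : Fin N → Fin n → ℝ := fun j i => (a j i : ℝ) with haold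
  set A : Fin N ⊕ Fin n → Fin n → ℝ :=
    Sum.elim aold (fun (j : Fin n) (i : Fin n) => if i = j then (d : ℝ) else 0) with hA
  -- the extended configuration spans everything
  have hAspan : Submodule.span ℝ (Set.range A) = ⊤ := by
    rw [eq_top_iff]
    rintro x -
    have hx : x = ∑ i, x i • fun j => if i = j then (1:ℝ) else 0 := pi_eq_sum_univ x
    rw [hx]
    refine Submodule.sum_mem _ fun j _ => Submodule.smul_mem _ _ ?_
    have hmem : A (Sum.inr j) ∈ Submodule.span ℝ (Set.range A) :=
      Submodule.subset_span ⟨Sum.inr j, rfl⟩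
    have h2 : ((d:ℝ)⁻¹) • A (Sum.inr j) = fun k => if j = k then (1:ℝ) else 0 := by
      funext k
      by_cases h : k = j <;>
        simp [hA, h, eq_comm, inv_mul_cancel₀ (show (d:ℝ) ≠ 0 by positivity)]
    exact h2 ▸ Submodule.smul_mem _ _ hmem
  -- choice of representation coefficients
  have hrep0 : ∀ (τ : Finset (Fin N ⊕ Fin n)) (i : Fin N ⊕ Fin n), ∃ c : Fin N ⊕ Fin n → ℝ,
      (Set.InjOn A ↑τ ∧ Submodule.span ℝ (A '' ↑τ) = ⊤) →
      ((∀ k, k ∉ τ → c k = 0) ∧ ∑ k ∈ τ, c k • A k = A i) := by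
    intro τ i
    by_cases h : Set.InjOn A ↑τ ∧ Submodule.span ℝ (A '' ↑τ) = ⊤
    · obtain ⟨c, hc⟩ := exists_rep A τ h.1 (A i) (by rw [h.2]; exact Submodule.mem_top)
      exact ⟨c, fun _ => hc⟩
    · exact ⟨0, fun h' => absurd h' h⟩
  choose cf hcf using hrep0
  -- the bad pairs and the genericity data
  set P : Finset (Finset (Fin N ⊕ Fin n) × (Fin N ⊕ Fin n)) := Finset.univ.filter
    (fun p => Set.InjOn A ↑p.1 ∧ Submodule.span ℝ (A '' ↑p.1) = ⊤ ∧ p.2 ∉ p.1 ∧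
      ((∃ j : Fin n, p.2 = Sum.inr j) ∨
        ∃ j : Fin n, Sum.inr j ∈ p.1 ∧ cf p.1 p.2 (Sum.inr j) ≠ 0)) with hP
  set α : Finset (Fin N ⊕ Fin n) × (Fin N ⊕ Fin n) → Fin n → ℝ :=
    fun p j => cf p.1 p.2 (Sum.inr j) - (if p.2 = Sum.inr j then 1 else 0) with hα
  set β : Finset (Fin N ⊕ Fin n) × (Fin N ⊕ Fin n) → ℝ :=
    fun p => (∑ k : Fin N, cf p.1 p.2 (Sum.inl k) * w k) - Sum.elim w (fun _ => 0) p.2 with hβ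
  have hαne : ∀ p ∈ P, α p ≠ 0 := by
    intro p hp
    rw [hP, Finset.mem_filter] at hp
    obtain ⟨-, hinj, hsp, hni, hrel⟩ := hp
    have hc := hcf p.1 p.2 ⟨hinj, hsp⟩
    rcases hrel with ⟨j, hj⟩ | ⟨j, hjmem, hjne⟩
    · intro h0
      have h1 := congrFun h0 j
      simp only [hα, Pi.zero_apply] at h1
      rw [if_pos hj, hc.1 (Sum.inr j) (hj ▸ hni)] at h1
      norm_num at h1
    · intro h0
      have h1 := congrFun h0 j
      simp only [hα, Pi.zero_apply] at h1
      have hne2 : p.2 ≠ Sum.inr j := fun h => hni (h ▸ hjmem)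
      rw [if_neg hne2, sub_zero] at h1
      exact hjne h1
  obtain ⟨wext, hwM, hgen⟩ := avoid P α β hαne M
  refine ⟨wext, hwM, ?_⟩
  set W : Fin N ⊕ Fin n → ℝ := Sum.elim w wext with hW
  intro σ hσ hmax
  obtain ⟨m, hm_eq, hm_lt⟩ := hσ
  have hmaxspan : Submodule.span ℝ (A '' ↑σ) = ⊤ :=
    span_of_maximal A W hAspan σ ⟨m, hm_eq, hm_lt⟩ hmax
  obtain ⟨τ, hτσ, hτcard, hτinj, hτind, hτspan⟩ := exists_basis_subset A σ hmaxspan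
  have hστ : σ = τ := by
    by_contra hne
    have hnsub : ¬ σ ⊆ τ := fun h => hne (Finset.Subset.antisymm h hτσ)
    obtain ⟨i, hiσ, hiτ⟩ := Finset.not_subset.1 hnsub
    have hc := hcf τ i ⟨hτinj, hτspan⟩
    set c : Fin N ⊕ Fin n → ℝ := cf τ i with hcdef
    -- the tightness relation
    have hkey : ∑ k ∈ τ, c k * W k = W i := by
      calc ∑ k ∈ τ, c k * W k
          = ∑ k ∈ τ, c k * (∑ k', m k' * A k k') := by
            refine Finset.sum_congr rfl fun k hk => by rw [hm_eq k (hτσ hk)]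
        _ = ∑ k ∈ τ, ∑ k', c k * (m k' * A k k') := by
            refine Finset.sum_congr rfl fun k _ => Finset.mul_sum _ _ _
        _ = ∑ k', ∑ k ∈ τ, c k * (m k' * A k k') := Finset.sum_comm
        _ = ∑ k', m k' * A i k' := by
            refine Finset.sum_congr rfl fun k' _ => ?_
            have h2 : A i k' = ∑ k ∈ τ, c k * A k k' := by
              have h3 := congrFun hc.2 k'
              rw [Finset.sum_apply] at h3
              rw [← h3]
              exact Finset.sum_congr rfl fun k _ => rfl
            rw [h2, Finset.mul_sum]
            exact Finset.sum_congr rfl fun k _ => by ring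
        _ = W i := hm_eq i hiσ
    have hsum_univ : ∑ k : Fin N ⊕ Fin n, c k * W k = W i := by
      rw [← hkey]
      exact (Finset.sum_subset (Finset.subset_univ τ)
        (fun k _ hk => by rw [hc.1 k hk, zero_mul])).symm
    have hsplit : ∑ k : Fin N, c (Sum.inl k) * w k + ∑ j : Fin n, c (Sum.inr j) * wext j
        = W i := by
      rw [← hsum_univ, Fintype.sum_sum_type]
      rfl
    by_cases hrel : (∃ j : Fin n, i = Sum.inr j) ∨
        ∃ j : Fin n, Sum.inr j ∈ τ ∧ c (Sum.inr j) ≠ 0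
    · -- generic case: contradiction with the choice of wext
      have hpP : (τ, i) ∈ P := by
        rw [hP, Finset.mem_filter]
        exact ⟨Finset.mem_univ _, hτinj, hτspan, hiτ, hrel⟩
      refine hgen (τ, i) hpP ?_
      have hαval : ∀ j, α (τ, i) j = c (Sum.inr j) - (if i = Sum.inr j then 1 else 0) := by
        intro j; rw [hα]
      have hβval : β (τ, i) = (∑ k : Fin N, c (Sum.inl k) * w k) - Sum.elim w (fun _ => 0) i := by
        rw [hβ]
      rw [hβval]
      have hα2 : ∑ j, α (τ, i) j * wext j
          = ∑ j, c (Sum.inr j) * wext j - ∑ j, (if i = Sum.inr j then (1:ℝ) else 0) * wext j := by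
        rw [← Finset.sum_sub_distrib]
        exact Finset.sum_congr rfl fun j _ => by rw [hαval j]; ring
      rw [hα2]
      rcases i with i₀ | j₀
      · have h3 : ∑ j, (if (Sum.inl i₀ : Fin N ⊕ Fin n) = Sum.inr j then (1:ℝ) else 0) * wext j = 0 := by
          simp
        rw [h3]
        have h4 : W (Sum.inl i₀) = w i₀ := rfl
        rw [h4] at hsplit
        have h5 : Sum.elim w (fun _ : Fin n => (0:ℝ)) ((Sum.inl i₀ : Fin N ⊕ Fin n)) = w i₀ := by simp
        rw [h5]
        linarith [hsplit]
      · have h3 : ∑ j, (if (Sum.inr j₀ : Fin N ⊕ Fin n) = Sum.inr j then (1:ℝ) else 0) * wext j = wext j₀ := by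
          simp [Sum.inr.injEq, eq_comm]
        rw [h3]
        have h4 : W (Sum.inr j₀) = wext j₀ := rfl
        rw [h4] at hsplit
        have h5 : Sum.elim w (fun _ : Fin n => (0:ℝ)) ((Sum.inr j₀ : Fin N ⊕ Fin n)) = 0 := by simp
        rw [h5]
        linarith [hsplit]
    · -- degenerate case: contradiction with the old triangulation
      push_neg at hrel
      obtain ⟨hnotr, hallz⟩ := hrel
      obtain ⟨i₀, rfl⟩ : ∃ i₀, i = Sum.inl i₀ := by
        rcases i with i₀ | j₀
        · exact ⟨i₀, rfl⟩
        · exact absurd rfl (hnotr j₀)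
      have hcz : ∀ j : Fin n, c (Sum.inr j) = 0 := by
        intro j
        by_cases h : Sum.inr j ∈ τ
        · exact hallz j h
        · exact hc.1 _ h
      set σ₀ : Finset (Fin N) := Finset.univ.filter (fun k => Sum.inl k ∈ σ) with hσ₀
      have hσ₀mem : memSubdiv aold w σ₀ := by
        refine ⟨m, fun k hk => ?_, fun k hk => ?_⟩
        · exact hm_eq (Sum.inl k) ((Finset.mem_filter.1 hk).2)
        · refine hm_lt (Sum.inl k) fun h => hk ?_
          exact Finset.mem_filter.2 ⟨Finset.mem_univ _, h⟩
      set S : Finset (Finset (Fin N)) := Finset.univ.powerset.filter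
        (fun τ' => σ₀ ⊆ τ' ∧ memSubdiv aold w τ') with hS
      have hS0 : σ₀ ∈ S := by
        rw [hS, Finset.mem_filter]
        exact ⟨Finset.mem_powerset.2 (Finset.subset_univ _), Finset.Subset.refl _, hσ₀mem⟩
      obtain ⟨σs, hσsS, hσsmax⟩ := S.exists_max_image Finset.card ⟨σ₀, hS0⟩
      obtain ⟨hσssub, hσsmem⟩ := (Finset.mem_filter.1 hσsS).2
      have hσsmaximal : ∀ τ', memSubdiv aold w τ' → σs ⊆ τ' → σs = τ' := by
        intro τ' hτ' hsub
        refine Finset.eq_of_subset_of_card_le hsub (hσsmax τ' ?_)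
        rw [hS, Finset.mem_filter]
        exact ⟨Finset.mem_powerset.2 (Finset.subset_univ _), hσssub.trans hsub, hτ'⟩
      obtain ⟨hcard, hind⟩ := hw σs hσsmem hσsmaximal
      -- build the dependency
      set τ₀ : Finset (Fin N) := Finset.univ.filter (fun k => Sum.inl k ∈ τ) with hτ₀
      have hτ₀σ₀ : τ₀ ⊆ σ₀ := by
        intro k hk
        exact Finset.mem_filter.2 ⟨Finset.mem_univ _, hτσ ((Finset.mem_filter.1 hk).2)⟩
      have hi₀σ₀ : i₀ ∈ σ₀ := Finset.mem_filter.2 ⟨Finset.mem_univ _, hiσ⟩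
      have hi₀τ₀ : i₀ ∉ τ₀ := fun h => hiτ ((Finset.mem_filter.1 h).2)
      have hτsum : ∑ k ∈ τ, c k • A k = ∑ k₀ ∈ τ₀, c (Sum.inl k₀) • A (Sum.inl k₀) := by
        have himgsub : τ₀.image Sum.inl ⊆ τ := by
          intro k hk
          rw [Finset.mem_image] at hk
          obtain ⟨k₀, hk₀, rfl⟩ := hk
          exact (Finset.mem_filter.1 hk₀).2
        have hvan : ∀ k ∈ τ, k ∉ τ₀.image Sum.inl → c k • A k = 0 := by
          intro k hk hknot
          rcases k with k₀ | j
          · exact absurd (Finset.mem_image_of_mem (Sum.inl : Fin N → Fin N ⊕ Fin n)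
              (Finset.mem_filter.2 ⟨Finset.mem_univ k₀, hk⟩)) hknot
          · rw [hcz j, zero_smul]
        rw [← Finset.sum_subset himgsub hvan]
        exact Finset.sum_image fun x _ y _ h => Sum.inl_injective h
      have hdep : aold i₀ = ∑ k₀ ∈ τ₀, c (Sum.inl k₀) • aold k₀ := by
        have := hc.2
        rw [hτsum] at this
        exact this.symm
      -- contradiction with linear independence of the old maximal simplex
      have hi₀σs : i₀ ∈ σs := hσssub hi₀σ₀
      have hmemspan : aold i₀ ∈ Submodule.span ℝ
          ((fun p : σs => aold ↑p) '' {p : σs | ↑p ∈ τ₀}) := by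
        rw [hdep]
        refine Submodule.sum_mem _ fun k₀ hk₀ => Submodule.smul_mem _ _ ?_
        exact Submodule.subset_span ⟨⟨k₀, hσssub (hτ₀σ₀ hk₀)⟩, hk₀, rfl⟩
      have hx_notin : (⟨i₀, hi₀σs⟩ : {x // x ∈ σs}) ∉ {p : {x // x ∈ σs} | ↑p ∈ τ₀} :=
        fun h => hi₀τ₀ h
      exact absurd hmemspan (hind.notMem_span_image hx_notin)
  subst hστ
  exact ⟨hτcard, hτind⟩
end

section
/- Let n ≥ 1, d ≥ 1 and m ≥ 1 be integers, and let a_1, …, a_m ∈ ℤ^n be vectors with nonnegative entries whose coordinates each sum to d. Let Λ ⊆ ℤ^n be the subgroup generated by a_1, …, a_m together with d·e_1, …, d·e_n (where e_1, …, e_n is the standard basis), and let H ⊆ (ℤ/dℤ)^n be the subgroup generated by the reductions of a_1, …, a_m modulo d. Then Λ has finite index in ℤ^n and n! · vol(P) = [ℤ^n : Λ] · #H, where vol(P) is the Lebesgue measure of the convex hull P of the set {0, a_1, …, a_m, d·e_1, …, d·e_n} in ℝ^n. -/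
open scoped BigOperators
open MeasureTheory


lemma corner_volume : ∀ (n : ℕ) (c : ℝ), 0 ≤ c →
    volume {x : Fin n → ℝ | (∀ i, 0 ≤ x i) ∧ ∑ i, x i ≤ c}
      = ENNReal.ofReal (c ^ n / n.factorial) := by
  intro n
  induction n with
  | zero =>
    intro c hc
    have h : {x : Fin 0 → ℝ | (∀ i, 0 ≤ x i) ∧ ∑ i, x i ≤ c} = Set.univ := by
      ext x; simp [hc]
    rw [h]
    simp [MeasureTheory.volume_pi, Measure.pi_univ]
  | succ n ih =>
    intro c hc
    set T : Set (ℝ × (Fin n → ℝ)) :=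
      {p | 0 ≤ p.1 ∧ (∀ i, 0 ≤ p.2 i) ∧ p.1 + ∑ i, p.2 i ≤ c} with hTdef
    have hT : MeasurableSet T := by
      apply IsClosed.measurableSet
      have h1 : IsClosed {p : ℝ × (Fin n → ℝ) | 0 ≤ p.1} :=
        isClosed_le continuous_const continuous_fst
      have h2 : IsClosed {p : ℝ × (Fin n → ℝ) | ∀ i, 0 ≤ p.2 i} := by
        have : {p : ℝ × (Fin n → ℝ) | ∀ i, 0 ≤ p.2 i}
            = ⋂ i, {p : ℝ × (Fin n → ℝ) | 0 ≤ p.2 i} := by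
          ext p; simp
        rw [this]
        exact isClosed_iInter fun i =>
          isClosed_le continuous_const ((continuous_apply i).comp continuous_snd)
      have h3 : IsClosed {p : ℝ × (Fin n → ℝ) | p.1 + ∑ i, p.2 i ≤ c} :=
        isClosed_le (continuous_fst.add
          (continuous_finset_sum _ fun i _ => (continuous_apply i).comp continuous_snd))
          continuous_const
      exact (h1.inter (h2.inter h3))
    have hmp := MeasureTheory.measurePreserving_piFinSuccAbove
      (fun _ : Fin (n+1) => (volume : Measure ℝ)) 0
    have hS : {x : Fin (n+1) → ℝ | (∀ i, 0 ≤ x i) ∧ ∑ i, x i ≤ c}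
        = (MeasurableEquiv.piFinSuccAbove (fun _ => ℝ) 0) ⁻¹' T := by
      ext x
      simp only [Set.mem_preimage, MeasurableEquiv.piFinSuccAbove_apply,
        Fin.insertNthEquiv_symm_apply, hTdef, Set.mem_setOf_eq, Fin.removeNth,
        Fin.succAbove_zero, Fin.sum_univ_succ, Fin.forall_fin_succ]
      tauto
    have key : volume {x : Fin (n+1) → ℝ | (∀ i, 0 ≤ x i) ∧ ∑ i, x i ≤ c}
        = ((volume : Measure ℝ).prod (Measure.pi fun _ : Fin n => volume)) T := by
      rw [hS]
      exact hmp.measure_preimage hT.nullMeasurableSet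
    rw [key, Measure.prod_apply hT]
    have hslice : ∀ t : ℝ, (Measure.pi fun _ : Fin n => (volume : Measure ℝ)) (Prod.mk t ⁻¹' T)
        = Set.indicator (Set.Icc 0 c) (fun t => ENNReal.ofReal ((c - t) ^ n / n.factorial)) t := by
      intro t
      by_cases ht : t ∈ Set.Icc 0 c
      · rw [Set.indicator_of_mem ht]
        have h1 : Prod.mk t ⁻¹' T = {y : Fin n → ℝ | (∀ i, 0 ≤ y i) ∧ ∑ i, y i ≤ c - t} := by
          ext y
          simp only [Set.mem_preimage, hTdef, Set.mem_setOf_eq]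
          constructor
          · rintro ⟨-, h2, h3⟩; exact ⟨h2, by linarith⟩
          · rintro ⟨h2, h3⟩; exact ⟨ht.1, h2, by linarith⟩
        rw [h1, ← MeasureTheory.volume_pi, ih (c - t) (by linarith [ht.2])]
      · rw [Set.indicator_of_notMem ht]
        have h1 : Prod.mk t ⁻¹' T = ∅ := by
          ext y
          simp only [Set.mem_preimage, hTdef, Set.mem_setOf_eq, Set.mem_empty_iff_false,
            iff_false]
          rintro ⟨h2, h3, h4⟩
          have : (0:ℝ) ≤ ∑ i, y i := Finset.sum_nonneg fun i _ => h3 i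
          simp only [Set.mem_Icc, not_and, not_le] at ht
          have := ht h2
          linarith
        simp [h1]
    simp only [hslice]
    rw [lintegral_indicator measurableSet_Icc]
    have hcont : Continuous (fun t : ℝ => (c - t) ^ n / (n.factorial : ℝ)) :=
      ((continuous_const.sub continuous_id).pow n).div_const _
    have hint : IntegrableOn (fun t : ℝ => (c - t) ^ n / (n.factorial : ℝ)) (Set.Icc 0 c) :=
      hcont.integrableOn_Icc
    have hnn : 0 ≤ᶠ[ae (volume.restrict (Set.Icc 0 c))]
        (fun t : ℝ => (c - t) ^ n / (n.factorial : ℝ)) := by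
      filter_upwards [ae_restrict_mem measurableSet_Icc] with t ht
      have : (0:ℝ) ≤ c - t := by linarith [ht.2]
      positivity
    rw [← MeasureTheory.ofReal_integral_eq_lintegral_ofReal hint hnn]
    congr 1
    rw [MeasureTheory.integral_Icc_eq_integral_Ioc,
      ← intervalIntegral.integral_of_le hc]
    have : ∫ t in (0:ℝ)..c, (c - t) ^ n / (n.factorial : ℝ)
        = (∫ t in (0:ℝ)..c, (c - t) ^ n) / (n.factorial : ℝ) := by
      rw [intervalIntegral.integral_div]
    rw [this, intervalIntegral.integral_comp_sub_left (fun x => x ^ n) c]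
    simp only [sub_zero, sub_self]
    rw [integral_pow]
    have hfac : ((n+1).factorial : ℝ) = (n+1) * n.factorial := by
      rw [Nat.factorial_succ]; push_cast; ring
    rw [hfac]
    field_simp
    simp


lemma hull_eq (n d m : ℕ) (hd : 0 < d) (a : Fin m → Fin n → ℤ)
    (ha : ∀ j i, 0 ≤ a j i) (hsum : ∀ j, ∑ i, a j i = (d : ℤ)) :
    convexHull ℝ ({0} ∪ Set.range (fun j : Fin m => fun i => (a j i : ℝ)) ∪
        Set.range (fun i : Fin n => fun k => if k = i then (d : ℝ) else 0))
      = {x : Fin n → ℝ | (∀ i, 0 ≤ x i) ∧ ∑ i, x i ≤ (d:ℝ)} := by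
  have hd' : (0:ℝ) < d := by exact_mod_cast hd
  apply Set.Subset.antisymm
  · apply convexHull_min
    · rintro x (( h | ⟨j, rfl⟩ ) | ⟨i, rfl⟩)
      · rcases h with rfl
        refine ⟨fun i => le_refl 0, by simp [hd'.le]⟩
      · refine ⟨fun i => ?_, ?_⟩
        · have := ha j i; dsimp only; positivity
        · have := hsum j
          rw [show ∑ i, ((a j i : ℝ)) = ((∑ i, a j i : ℤ) : ℝ) by push_cast; ring, this]
          push_cast; exact le_rfl
      · constructor
        · intro k; dsimp only; split <;> simp [hd'.le]
        · simp [Finset.sum_ite_eq]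
    · have hcvx1 : Convex ℝ {x : Fin n → ℝ | ∀ i, 0 ≤ x i} := by
        have : {x : Fin n → ℝ | ∀ i, 0 ≤ x i} = ⋂ i, {x : Fin n → ℝ | 0 ≤ x i} := by
          ext x; simp
        rw [this]
        exact convex_iInter fun i => convex_halfSpace_ge ⟨fun _ _ => rfl, fun _ _ => rfl⟩ 0
      have hcvx2 : Convex ℝ {x : Fin n → ℝ | ∑ i, x i ≤ (d:ℝ)} :=
        convex_halfSpace_le ⟨fun x y => by simp [Finset.sum_add_distrib],
          fun r x => by simp [Finset.mul_sum]⟩ _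
      exact hcvx1.inter hcvx2
  · rintro x ⟨hx0, hxs⟩
    set w : Fin (n+1) → ℝ := Fin.cons (1 - (∑ i, x i) / d) (fun i => x i / d) with hw
    set p : Fin (n+1) → (Fin n → ℝ) :=
      Fin.cons 0 (fun i => fun k => if k = i then (d : ℝ) else 0) with hp
    have hw0 : ∀ i ∈ Finset.univ, 0 ≤ w i := by
      intro i _
      refine Fin.cases ?_ ?_ i
      · simp only [hw, Fin.cons_zero]
        have : (∑ i, x i) / d ≤ 1 := by
          rw [div_le_one hd']; exact hxs
        linarith
      · intro j; simp only [hw, Fin.cons_succ]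
        exact div_nonneg (hx0 j) hd'.le
    have hw1 : ∑ i, w i = 1 := by
      rw [Fin.sum_univ_succ]
      simp only [hw, Fin.cons_zero, Fin.cons_succ]
      rw [← Finset.sum_div]
      field_simp
      ring
    have hpmem : ∀ i ∈ Finset.univ, p i ∈ convexHull ℝ
        ({0} ∪ Set.range (fun j : Fin m => fun i => (a j i : ℝ)) ∪
          Set.range (fun i : Fin n => fun k => if k = i then (d : ℝ) else 0)) := by
      intro i _
      apply subset_convexHull
      refine Fin.cases ?_ ?_ i
      · left; left; simp [hp]
      · intro j; right; exact ⟨j, by simp [hp]⟩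
    have hxe : x = ∑ i, w i • p i := by
      rw [Fin.sum_univ_succ]
      simp only [hw, hp, Fin.cons_zero, Fin.cons_succ, smul_zero, zero_add]
      funext k
      simp only [Finset.sum_apply, Pi.smul_apply, smul_eq_mul, mul_ite, mul_zero]
      rw [Finset.sum_ite_eq]
      simp [Finset.mem_univ]
      field_simp
    rw [hxe]
    exact (convex_convexHull ℝ _).sum_mem hw0 hw1 hpmem


lemma alg_part (n d m : ℕ) (hd : 0 < d) (a : Fin m → Fin n → ℤ) :
    let Λ : Submodule ℤ (Fin n → ℤ) := Submodule.span ℤ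
      (Set.range a ∪ Set.range (fun i : Fin n => fun k => if k = i then (d : ℤ) else 0))
    let H : AddSubgroup (Fin n → ZMod d) := AddSubgroup.closure
      (Set.range (fun j : Fin m => fun i => ((a j i : ℤ) : ZMod d)))
    Nat.card ((Fin n → ℤ) ⧸ Λ) * Nat.card H = d ^ n ∧ Finite ((Fin n → ℤ) ⧸ Λ) := by
  intro Λ H
  -- reduction hom
  set f : (Fin n → ℤ) →+ (Fin n → ZMod d) :=
    { toFun := fun x i => ((x i : ℤ) : ZMod d)
      map_zero' := by funext i; simp
      map_add' := by intro x y; funext i; push_cast; simp } with hf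
  have hfs : Function.Surjective f := by
    intro y
    refine ⟨fun i => (ZMod.intCast_surjective (y i)).choose, ?_⟩
    funext i
    exact (ZMod.intCast_surjective (y i)).choose_spec
  have hΛ' : Λ.toAddSubgroup = AddSubgroup.closure
      (Set.range a ∪ Set.range (fun i : Fin n => fun k => if k = i then (d : ℤ) else 0)) :=
    Submodule.span_int_eq_addSubgroupClosure _
  -- ker f ≤ Λ
  have hker : f.ker ≤ Λ.toAddSubgroup := by
    intro x hx
    simp only [AddMonoidHom.mem_ker, hf, AddMonoidHom.coe_mk, ZeroHom.coe_mk] at hx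
    have hdvd : ∀ i, (d : ℤ) ∣ x i := by
      intro i
      have : ((x i : ℤ) : ZMod d) = 0 := congrFun hx i
      exact_mod_cast (ZMod.intCast_zmod_eq_zero_iff_dvd _ _).mp this
    have hxe : x = ∑ i, (x i / (d:ℤ)) • (fun k => if k = i then (d : ℤ) else 0) := by
      funext k
      simp only [Finset.sum_apply, Pi.smul_apply, smul_eq_mul, mul_ite, mul_zero]
      rw [Finset.sum_ite_eq]
      simp only [Finset.mem_univ, if_true]
      exact (Int.ediv_mul_cancel (hdvd k)).symm
    show x ∈ Λ
    rw [hxe]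
    exact Submodule.sum_mem _ fun i _ => Submodule.smul_mem _ _
      (Submodule.subset_span (Or.inr ⟨i, rfl⟩))
  -- image of Λ is H
  have hmap : Λ.toAddSubgroup.map f = H := by
    rw [hΛ', AddMonoidHom.map_closure]
    have h1 : f '' Set.range a = Set.range (fun j : Fin m => fun i => ((a j i : ℤ) : ZMod d)) := by
      rw [← Set.range_comp]; rfl
    have h2 : f '' Set.range (fun i : Fin n => fun k => if k = i then (d : ℤ) else 0) ⊆ {0} := by
      rintro - ⟨-, ⟨i, rfl⟩, rfl⟩
      simp only [Set.mem_singleton_iff, hf, AddMonoidHom.coe_mk, ZeroHom.coe_mk]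
      funext k
      simp only [Pi.zero_apply]
      split
      · exact_mod_cast ZMod.natCast_self d
      · simp
    apply le_antisymm
    · rw [AddSubgroup.closure_le, Set.image_union]
      apply Set.union_subset
      · rw [h1]; exact AddSubgroup.subset_closure
      · intro z hz
        have hz0 : z = 0 := h2 hz
        rw [SetLike.mem_coe, hz0]
        exact H.zero_mem
    · exact AddSubgroup.closure_mono
        (h1 ▸ Set.image_mono (f := f) Set.subset_union_left)
  have e1 : f.ker.relIndex Λ.toAddSubgroup = Nat.card H := by
    rw [AddSubgroup.relIndex_ker, hmap]
  have e2 : f.ker.index = d ^ n := by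
    rw [AddSubgroup.index_ker, AddMonoidHom.range_eq_top.mpr hfs,
      Nat.card_congr AddSubgroup.topEquiv.toEquiv, Nat.card_pi]
    simp [Nat.card_zmod]
  have e3 := AddSubgroup.relIndex_mul_index hker
  have e4 : Nat.card ((Fin n → ℤ) ⧸ Λ) = Λ.toAddSubgroup.index :=
    (AddSubgroup.index_eq_card _).symm
  have key : Nat.card ((Fin n → ℤ) ⧸ Λ) * Nat.card H = d ^ n := by
    rw [e4, mul_comm, ← e1, e3, e2]
  refine ⟨key, ?_⟩
  have hne : Λ.toAddSubgroup.index ≠ 0 := by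
    intro h0
    rw [e4, h0] at key
    simp at key
    exact (pow_pos hd n).ne' key.symm
  haveI : Λ.toAddSubgroup.FiniteIndex := ⟨hne⟩
  exact AddSubgroup.finite_quotient_of_finiteIndex (H := Λ.toAddSubgroup)


/-- Normalized volume equals index times the cardinality of the reduction subgroup:
for nonnegative integer vectors `a_1, …, a_m` with coordinate sums `d`, letting
`Λ ⊆ ℤ^n` be the subgroup generated by the `a_j` and the `d·e_i`, and `H ⊆ (ℤ/dℤ)^n`
the subgroup generated by the reductions of the `a_j`, the subgroup `Λ` has finite
index and `n! · vol(P) = [ℤ^n : Λ] · #H`, where `P` is the convex hull of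
`{0, a_1, …, a_m, d·e_1, …, d·e_n}` in `ℝ^n`. -/
theorem stmt5 (n d m : ℕ) (hn : 0 < n) (hd : 0 < d) (hm : 0 < m)
    (a : Fin m → Fin n → ℤ) (ha : ∀ j i, 0 ≤ a j i) (hsum : ∀ j, ∑ i, a j i = (d : ℤ)) :
    let Λ : Submodule ℤ (Fin n → ℤ) := Submodule.span ℤ
      (Set.range a ∪ Set.range (fun i : Fin n => fun k => if k = i then (d : ℤ) else 0))
    let H : AddSubgroup (Fin n → ZMod d) := AddSubgroup.closure
      (Set.range (fun j : Fin m => fun i => ((a j i : ℤ) : ZMod d)))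
    let P : Set (Fin n → ℝ) := convexHull ℝ
      ({0} ∪ Set.range (fun j : Fin m => fun i => (a j i : ℝ)) ∪
        Set.range (fun i : Fin n => fun k => if k = i then (d : ℝ) else 0))
    Finite ((Fin n → ℤ) ⧸ Λ) ∧
      (n.factorial : ENNReal) * MeasureTheory.volume P =
        (Nat.card ((Fin n → ℤ) ⧸ Λ) : ENNReal) * (Nat.card H : ENNReal) := by
  intro Λ H P
  obtain ⟨hcard, hfin⟩ := alg_part n d m hd a
  refine ⟨hfin, ?_⟩
  have hvol : MeasureTheory.volume P = ENNReal.ofReal ((d:ℝ) ^ n / n.factorial) := by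
    show MeasureTheory.volume (convexHull ℝ _) = _
    rw [hull_eq n d m hd a ha hsum]
    exact corner_volume n (d:ℝ) (by positivity)
  rw [hvol]
  have hfac : ((n.factorial : ℕ) : ENNReal) = ENNReal.ofReal (n.factorial : ℝ) := by
    rw [ENNReal.ofReal_natCast]
  rw [hfac, ← ENNReal.ofReal_mul (by positivity)]
  have h1 : (n.factorial : ℝ) * ((d:ℝ) ^ n / n.factorial) = (d:ℝ) ^ n := by
    field_simp
  rw [h1]
  have h2 : ENNReal.ofReal ((d:ℝ) ^ n) = ((d ^ n : ℕ) : ENNReal) := by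
    rw [show ((d:ℝ) ^ n) = ((d ^ n : ℕ) : ℝ) by push_cast; ring, ENNReal.ofReal_natCast]
  rw [h2, ← hcard]
  push_cast
  ring
end
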